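/- For every infinite set x ⊆ m^{<ω} there exists an infinite subset x' ⊆ x such that x' is a (u,v)-comb for some pair (u,v) ∈ m × m. -/

import Mathlib

open Classical

/-! ### Gaps on countable sets -/

/-- `a ⊆* b` : `a` is almost contained in `b`. -/
def AlmostSubset {N : Type} (a b : Set N) : Prop := (a \ b).Finite

/-- An ideal on `N`: nonempty, closed under finite unions and subsets, and
containing all finite sets. -/
def IsIdealOn {N : Type} (I : Set (Set N)) : Prop :=
  I.Nonempty ∧ (∀ a ∈ I, ∀ b ∈ I, a ∪ b ∈ I) ∧ (∀ a ∈ I, ∀ b, b ⊆ a → b ∈ I) ∧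
    ∀ a : Set N, a.Finite → a ∈ I

/-- The orthogonal `I^⊥` of a family of sets. -/
def perp {N : Type} (I : Set (Set N)) : Set (Set N) := {a | ∀ b ∈ I, (a ∩ b).Finite}

/-- `a ≥ I` : every member of `I` is almost contained in `a`. -/
def AboveIdeal {N : Type} (a : Set N) (I : Set (Set N)) : Prop := ∀ b ∈ I, (b \ a).Finite

/-- A family of ideals indexed by `ι` forms a multiple gap. -/
def IsGapFam {ι N : Type} (Γ : ι → Set (Set N)) : Prop :=
  (∀ i, IsIdealOn (Γ i)) ∧
  (∀ i j, i ≠ j → ∀ a ∈ Γ i, ∀ b ∈ Γ j, (a ∩ b).Finite) ∧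
  ∀ a : ι → Set N, (∀ i, AboveIdeal (a i) (Γ i)) → (⋂ i, a i).Infinite

/-- Weak countable separation of a family of ideals. -/
def WeaklyCountablySeparated {ι N : Type} (Γ : ι → Set (Set N)) : Prop :=
  ∃ C : Set (Set N), C.Countable ∧ (∀ c ∈ C, c.Infinite) ∧
    ∀ x : ι → Set N, (∀ i, x i ∈ Γ i) →
      ∃ c : ι → Set N, (∀ i, c i ∈ C) ∧ (∀ i, AlmostSubset (x i) (c i)) ∧ (⋂ i, c i).Finite

/-- A strong multiple gap: a gap which is not weakly countably separated. -/
def IsStrongGapFam {ι N : Type} (Γ : ι → Set (Set N)) : Prop :=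
  IsGapFam Γ ∧ ¬ WeaklyCountablySeparated Γ

/-- The identification of the Cantor space `N → Bool` with `𝒫(N)`. -/
def setOfFun {N : Type} (f : N → Bool) : Set N := {x | f x = true}

/-- A family of subsets of `N` is analytic if the corresponding subset of the
Cantor space `N → Bool` is an analytic set. -/
def IsAnalyticFamily {N : Type} (I : Set (Set N)) : Prop :=
  MeasureTheory.AnalyticSet (setOfFun ⁻¹' I)

/-- A family of subsets of `N` is Souslin measurable if the corresponding subset of
the Cantor space belongs to the σ-algebra generated by the analytic sets. -/
def SouslinMeasurableFamily {N : Type} (S : Set (Set N)) : Prop :=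
  @MeasurableSet _ (MeasurableSpace.generateFrom
    {A : Set (N → Bool) | MeasureTheory.AnalyticSet A}) (setOfFun ⁻¹' S)

/-- An analytic strong `n`-gap. -/
def IsAnalyticStrongGap {N : Type} (n : ℕ) (Γ : Fin n → Set (Set N)) : Prop :=
  IsStrongGapFam Γ ∧ ∀ i, IsAnalyticFamily (Γ i)

/-- `Γ ≤ Γ'` for `n`-gaps. -/
def GapLE {N N' : Type} {n : ℕ} (Γ : Fin n → Set (Set N)) (Γ' : Fin n → Set (Set N')) : Prop :=
  ∃ φ : N → N', Function.Injective φ ∧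
    (∀ i, ∀ x ∈ Γ i, φ '' x ∈ Γ' i) ∧
    ∀ x ∈ perp (⋃ i, Γ i), φ '' x ∈ perp (⋃ i, Γ' i)

/-- A minimal analytic strong `n`-gap. -/
def IsMinimalStrongGap {N : Type} (n : ℕ) (Γ : Fin n → Set (Set N)) : Prop :=
  IsAnalyticStrongGap n Γ ∧
  ∀ (N' : Type) [Countable N'] (Γ' : Fin n → Set (Set N')),
    IsAnalyticStrongGap n Γ' → GapLE Γ' Γ → GapLE Γ Γ'

/-! ### Trees, chains and combs -/

/-- A `u`-chain in the tree `ι^{<ω}`. -/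
def IsUChain {ι : Type} (u : ι) (x : Set (List ι)) : Prop :=
  ∃ s : ℕ → List ι, x = Set.range s ∧ ∀ k, (s k ++ [u]) <+: s (k + 1)

/-- A `(u,v)`-comb in the tree `ι^{<ω}`; a `(u,u)`-comb is by convention a `u`-chain. -/
def IsComb {ι : Type} (u v : ι) (x : Set (List ι)) : Prop :=
  (u = v ∧ IsUChain u x) ∨
  (u ≠ v ∧ ∃ t s : ℕ → List ι, x = Set.range t ∧
    (∀ k, (s k ++ [u]) <+: s (k + 1)) ∧
    (∀ k, (s k ++ [v]) <+: t k) ∧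
    ∀ k, (t k).length < (s (k + 1)).length)

/-- The ideal `Γ_f(i)` on `ι^{<ω}` generated by all `(u,v)`-combs with `f(u,v) = i`
(`none` plays the role of `∞`): all sets almost covered by finitely many such combs. -/
def combIdeal {ι : Type} {n : ℕ} (f : ι × ι → Option (Fin n)) (i : Option (Fin n)) :
    Set (Set (List ι)) :=
  {a | ∃ F : Finset (Set (List ι)),
      (∀ c ∈ F, ∃ u v, f (u, v) = i ∧ IsComb u v c) ∧
      (a \ ⋃ c ∈ F, c).Finite}

/-- The multiple gap `Γ_f` associated to `f : ι × ι → n ∪ {∞}`. -/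
def GammaF {ι : Type} {n : ℕ} (f : ι × ι → Option (Fin n)) : Fin n → Set (Set (List ι)) :=
  fun i => combIdeal f (some i)

/-- `Inc s t p` : `inc(s,t) = p` (for `s ≠ t`). -/
def Inc {ι : Type} (s t : List ι) (p : ι × ι) : Prop :=
  (p.1 = p.2 ∧ ((s ++ [p.1]) <+: t ∨ (t ++ [p.1]) <+: s)) ∨
  (p.1 ≠ p.2 ∧ ∃ r : List ι, (r ++ [p.1]) <+: s ∧ (r ++ [p.2]) <+: t)

/-- A reduction map `ε : ι₀² → ι₁²`. -/
def IsReductionMap {ι₀ ι₁ : Type} (ε : ι₀ × ι₀ → ι₁ × ι₁) : Prop :=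
  ∃ (k : ℕ) (e : ι₀ → List ι₁) (x : List ι₁),
    Function.Injective e ∧ (∀ u, (e u).length = k) ∧ x.length < k ∧
    (∀ u v, u ≠ v → Inc (e u) (e v) (ε (u, v))) ∧
    ∀ u, Inc (e u) x (ε (u, u))

/-- A complete subtree of `ι^{<ω}`. -/
def IsCompleteSubtree {ι : Type} (T : Set (List ι)) : Prop :=
  ∃ φ : List ι → List ι, Function.Injective φ ∧ Set.range φ = T ∧
    ∀ (s t : List ι) (u : ι), (s ++ [u]) <+: t → (φ s ++ [u]) <+: φ t

/-- `pbranch(f)`: those `k < n` attained by `f` only on the diagonal. -/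
def pbranch {ι : Type} {n : ℕ} (f : ι × ι → Option (Fin n)) : Set (Fin n) :=
  {k | ∀ u v, f (u, v) = some k → u = v}

/-- `k` is `f`-attached to `l`. -/
def Attached {ι : Type} {n : ℕ} (f : ι × ι → Option (Fin n)) (k l : Option (Fin n)) : Prop :=
  ∀ u v, u ≠ v → f (u, v) = k → f (v, u) = l

/-- `f` is `ψ`-branch-reduced. -/
def BranchReduced {ι : Type} {n : ℕ} (f : ι × ι → Option (Fin n)) (A : Set (Fin n))
    (ψ : Fin n → Fin n → Option (Fin n)) : Prop :=
  ∀ (u v : ι) (a b : Fin n), f (u, u) = some a → f (v, v) = some b →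
    a ∈ A → b ∈ A → a ≠ b → f (u, v) = ψ a b

/-! ### Restrictions and clovers -/

/-- The restriction `I|_a` of an ideal on `N` to `a ⊆ N`, as an ideal on `↥a`. -/
def restrictIdeal {N : Type} (I : Set (Set N)) (a : Set N) : Set (Set ↥a) :=
  {y | ∃ x ∈ I, y = Subtype.val ⁻¹' x}

/-- A clover. -/
def IsClover {N : Type} {n : ℕ} (Γ : Fin n → Set (Set N)) : Prop :=
  ¬ ∃ (a : Set N) (B : Set (Fin n)) (i : Fin n), i ∉ B ∧ a ∈ perp (Γ i) ∧
      IsGapFam fun j : ↥B => restrictIdeal (Γ j) a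

/-! ### n-types -/

/-- The minimum of a set of `Fin n`, as an `Option`. -/
noncomputable def setMin {n : ℕ} (s : Set (Fin n)) : Option (Fin n) :=
  if h : s.Nonempty then some ((Set.toFinite s).toFinset.min' ((Set.Finite.toFinset_nonempty _).mpr h)) else none

/-- The maximum of a set of `Fin n`, as an `Option`. -/
noncomputable def setMax {n : ℕ} (s : Set (Fin n)) : Option (Fin n) :=
  if h : s.Nonempty then some ((Set.toFinite s).toFinset.max' ((Set.Finite.toFinset_nonempty _).mpr h)) else none

/-- An `n`-type: a partition `n = A ∪ B ∪ C ∪ D ∪ E` (encoded by the labelling `part`,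
with `A = part⁻¹ 0`, …, `E = part⁻¹ 4`), a map `ψ` defined on pairs of distinct elements
of `A` with values in `B ∪ {∞}` covering `B` (normalized to `none` off its domain),
a partition `P` of `C` into sets of cardinality 1 or 2, and a map `γ : D → B ∪ E ∪ {∞}`
(normalized to `none` off `D`) with fibers over `E` of cardinality at least 2;
moreover if `A = ∅` then `B = D = E = ∅` and all members of `P` have cardinality 2. -/
structure NType (n : ℕ) where
  part : Fin n → Fin 5
  psi : Fin n → Fin n → Option (Fin n)
  P : Set (Set (Fin n))
  gam : Fin n → Option (Fin n)
  psi_dom : ∀ i j, ¬(part i = 0 ∧ part j = 0 ∧ i ≠ j) → psi i j = none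
  psi_mem : ∀ i j b, part i = 0 → part j = 0 → i ≠ j → psi i j = some b → part b = 1
  psi_surj : ∀ b, part b = 1 → ∃ i j, part i = 0 ∧ part j = 0 ∧ i ≠ j ∧ psi i j = some b
  P_sub : ∀ p ∈ P, ∀ k ∈ p, part k = 2
  P_cover : ∀ k, part k = 2 → ∃ p ∈ P, k ∈ p
  P_disj : ∀ p ∈ P, ∀ q ∈ P, p ≠ q → Disjoint p q
  P_card : ∀ p ∈ P, p.ncard = 1 ∨ p.ncard = 2
  gam_dom : ∀ k, part k ≠ 3 → gam k = none
  gam_mem : ∀ k b, part k = 3 → gam k = some b → part b = 1 ∨ part b = 4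
  gam_fiber : ∀ b, part b = 4 → 2 ≤ {k | part k = 3 ∧ gam k = some b}.ncard
  A_empty : (∀ i, part i ≠ 0) → (∀ i, part i = 2) ∧ ∀ p ∈ P, p.ncard = 2

/-- The index set `M = A* ∪ P ∪ D` associated to an `n`-type, where `A* = A`
if `A ≠ ∅` and `A*` is a single extra point (`root`) if `A = ∅`. -/
inductive NType.Idx {n : ℕ} (α : NType n) : Type
  | ofA (i : Fin n) (h : α.part i = 0) : NType.Idx α
  | root (h : ∀ i, α.part i ≠ 0) : NType.Idx α
  | ofP (s : Set (Fin n)) (h : s ∈ α.P) : NType.Idx α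
  | ofD (i : Fin n) (h : α.part i = 3) : NType.Idx α

/-- Whether an element of `M` belongs to `A*`. -/
def NType.Idx.isAst {n : ℕ} {α : NType n} : α.Idx → Prop
  | .ofA _ _ => True
  | .root _ => True
  | .ofP _ _ => False
  | .ofD _ _ => False

/-- The map `σ : M → n`: the identity on `A* ∪ D` and the minimum on members of `P`. -/
noncomputable def NType.sigma {n : ℕ} (α : NType n) : α.Idx → Option (Fin n)
  | .ofA i _ => some i
  | .root _ => if h : 0 < n then some ⟨0, h⟩ else none
  | .ofP s _ => setMin s
  | .ofD i _ => some i

/-- The map `τ`: `γ` on `D` and the maximum on members of `P` (junk elsewhere). -/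
noncomputable def NType.tau {n : ℕ} (α : NType n) : α.Idx → Option (Fin n)
  | .ofA i _ => some i
  | .root _ => none
  | .ofP s _ => setMax s
  | .ofD i _ => α.gam i

open Classical in
/-- The function `f^α : M × M → n ∪ {∞}` associated to an `n`-type `α`. -/
noncomputable def NType.fA {n : ℕ} (α : NType n) (q : α.Idx × α.Idx) : Option (Fin n) :=
  if q.1 = q.2 then α.sigma q.1
  else
    match q.1, q.2 with
    | .ofA i' _, .ofA j' _ => α.psi i' j'
    | i, j =>
      if i.isAst then α.tau j
      else if j.isAst then α.sigma i
      else if ∃ si sj, α.sigma i = some si ∧ α.sigma j = some sj ∧ si < sj then α.sigma i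
      else α.tau j

/-! König's lemma gives a branch `b` through `m^{<ω}` each node of which has infinitely many
extensions in `x`. If infinitely many points of `x` lie on the branch, pigeonholing the letter by
which the branch leaves them gives a chain. Otherwise every node of the branch lies below a point
`t ∈ x` off the branch, which leaves it at a node `branch b j` through a letter `v ≠ b j`. Taking
such points departing ever higher, each shorter than the next departure node, and with the pair
`(b j, v)` constant, gives a `(b j, v)`-comb. -/

theorem Set.Infinite.exists_infinite_inter_fiber {β α : Type*} [Finite α] {S : Set β}
    (hS : S.Infinite) (f : β → α) : ∃ a, (S ∩ f ⁻¹' {a}).Infinite := by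
  by_contra! h
  refine hS ((Set.finite_iUnion h).subset fun n hn => ?_)
  exact Set.mem_iUnion.mpr ⟨f n, hn, rfl⟩

theorem Set.Infinite.exists_strictMono_sparse {S : Set ℕ} (hS : S.Infinite) (g : ℕ → ℕ) :
    ∃ φ : ℕ → ℕ, StrictMono φ ∧ ∀ n, φ n ∈ S ∧ g (φ n) < φ (n + 1) := by
  choose next hnextS hnext using hS.exists_gt
  let φ : ℕ → ℕ := fun n => Nat.rec (next 0) (fun _ p => next (max (g p) p)) n
  have hφ : ∀ n, g (φ n) < φ (n + 1) ∧ φ n < φ (n + 1) := fun n =>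
    max_lt_iff.mp (hnext (max (g (φ n)) (φ n)))
  refine ⟨φ, strictMono_nat_of_lt_succ fun n => (hφ n).2, fun n => ⟨?_, (hφ n).1⟩⟩
  cases n <;> apply hnextS

section Tree

variable {ι : Type}

def cone (x : Set (List ι)) (s : List ι) : Set (List ι) := {a ∈ x | s <+: a}

theorem cone_nil (x : Set (List ι)) : cone x [] = x := by
  simp [cone]

theorem cone_subset_insert_iUnion (x : Set (List ι)) (s : List ι) :
    cone x s ⊆ insert s (⋃ u, cone x (s ++ [u])) := by
  rintro a ⟨hax, r, rfl⟩
  cases r with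
  | nil => exact Or.inl (List.append_nil s)
  | cons u r => exact Or.inr (Set.mem_iUnion.mpr ⟨u, hax, r, by simp⟩)

theorem exists_infinite_cone_append [Finite ι] {x : Set (List ι)} {s : List ι}
    (hs : (cone x s).Infinite) : ∃ u, (cone x (s ++ [u])).Infinite := by
  by_contra! h
  exact hs (((Set.finite_iUnion h).insert s).subset (cone_subset_insert_iUnion x s))

def branch (b : ℕ → ι) (k : ℕ) : List ι := (List.range k).map b

@[simp]
theorem length_branch (b : ℕ → ι) (k : ℕ) : (branch b k).length = k := by
  simp [branch]

theorem branch_succ (b : ℕ → ι) (k : ℕ) : branch b (k + 1) = branch b k ++ [b k] := by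
  simp [branch, List.range_succ]

theorem branch_prefix_branch (b : ℕ → ι) {j l : ℕ} (h : j ≤ l) : branch b j <+: branch b l := by
  rw [List.prefix_iff_eq_take, length_branch, branch, branch, ← List.map_take, List.take_range,
    min_eq_left h]

theorem branch_append_prefix_branch (b : ℕ → ι) {j l : ℕ} (h : j < l) :
    branch b j ++ [b j] <+: branch b l :=
  branch_succ b j ▸ branch_prefix_branch b h

theorem exists_branch_infinite_cone [Finite ι] {x : Set (List ι)} (hx : x.Infinite) :
    ∃ b : ℕ → ι, ∀ k, (cone x (branch b k)).Infinite := by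
  choose next hnext using fun s : {s : List ι // (cone x s).Infinite} =>
    exists_infinite_cone_append s.2
  let step (s : {s : List ι // (cone x s).Infinite}) : {s : List ι // (cone x s).Infinite} :=
    ⟨s.1 ++ [next s], hnext s⟩
  let c (k : ℕ) := step^[k] ⟨[], (cone_nil x).symm ▸ hx⟩
  have hc : ∀ k, (c k).1 = branch (fun k => next (c k)) k := by
    intro k
    induction k with
    | zero => rfl
    | succ k ih =>
      rw [branch_succ, ← ih]
      exact congrArg Subtype.val (Function.iterate_succ_apply' step k _)
  exact ⟨fun k => next (c k), fun k => hc k ▸ (c k).2⟩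

theorem exists_branch_departure {b : ℕ → ι} {t : List ι} (ht : t ∉ Set.range (branch b))
    {k : ℕ} (hk : branch b k <+: t) : ∃ j ≥ k, ∃ v ≠ b j, branch b j ++ [v] <+: t := by
  obtain ⟨r, hr⟩ := hk
  induction r generalizing k with
  | nil => exact absurd ⟨k, by simpa using hr⟩ ht
  | cons v r ih =>
    by_cases hv : v = b k
    · obtain ⟨j, hj, hdep⟩ := ih (k := k + 1) (by simpa [branch_succ, hv] using hr)
      exact ⟨j, by omega, hdep⟩
    · exact ⟨k, le_rfl, v, hv, r, by simpa using hr⟩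

theorem infinite_range_of_length_lt_succ {s : ℕ → List ι}
    (hs : ∀ n, (s n).length < (s (n + 1)).length) : (Set.range s).Infinite :=
  Set.infinite_range_of_injective fun _ _ h =>
    (strictMono_nat_of_lt_succ hs).injective (congrArg List.length h)

theorem IsComb.infinite {u v : ι} {x : Set (List ι)} (h : IsComb u v x) : x.Infinite := by
  rcases h with ⟨-, s, rfl, hs⟩ | ⟨-, t, s, rfl, -, hst, hlen⟩
  · refine infinite_range_of_length_lt_succ fun n => ?_
    simpa using (hs n).length_le
  · refine infinite_range_of_length_lt_succ fun n => (hlen n).trans_le ?_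
    simpa using ((hst (n + 1)).length_le).trans' (by simp)

theorem isComb_range_branch_comp {b : ℕ → ι} {φ : ℕ → ℕ} (hφ : StrictMono φ) {u : ι}
    (hu : ∀ n, b (φ n) = u) : IsComb u u (Set.range (branch b ∘ φ)) :=
  Or.inl ⟨rfl, _, rfl, fun n => hu n ▸ branch_append_prefix_branch b (hφ n.lt_succ_self)⟩

theorem isComb_range_of_departures {b : ℕ → ι} {u v : ι} (huv : u ≠ v) {t : ℕ → List ι}
    {j : ℕ → ℕ} (hu : ∀ n, b (j n) = u) (hdep : ∀ n, branch b (j n) ++ [v] <+: t n)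
    (hlen : ∀ n, (t n).length < j (n + 1)) : IsComb u v (Set.range t) := by
  have hj : ∀ n, j n < j (n + 1) := fun n => by
    have := (hdep n).length_le
    simp only [List.length_append, length_branch, List.length_singleton] at this
    linarith [hlen n]
  refine Or.inr ⟨huv, t, branch b ∘ j, rfl, fun n => ?_, hdep, fun n => ?_⟩
  · exact hu n ▸ branch_append_prefix_branch b (hj n)
  · simpa using hlen n

theorem exists_comb_subset_of_infinite_inter_range_branch [Finite ι] {x : Set (List ι)}
    {b : ℕ → ι} (h : (x ∩ Set.range (branch b)).Infinite) : ∃ x' ⊆ x, ∃ u v, IsComb u v x' := by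
  have hS : (branch b ⁻¹' x).Infinite := .of_image _ (Set.image_preimage_eq_inter_range ▸ h)
  obtain ⟨u, hu⟩ := hS.exists_infinite_inter_fiber b
  obtain ⟨φ, hφ, hφS⟩ :=
    Filter.extraction_of_frequently_atTop (Nat.frequently_atTop_iff_infinite.mpr hu)
  exact ⟨_, Set.range_subset_iff.mpr fun n => (hφS n).1, u, u,
    isComb_range_branch_comp hφ fun n => (hφS n).2⟩

theorem exists_comb_subset_of_finite_inter_range_branch [Finite ι] {x : Set (List ι)}
    {b : ℕ → ι} (hb : ∀ k, (cone x (branch b k)).Infinite)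
    (h : (x ∩ Set.range (branch b)).Finite) : ∃ x' ⊆ x, ∃ u v, IsComb u v x' := by
  have hdeparting : ∀ k, ∃ t ∈ x, ∃ j ≥ k, ∃ v ≠ b j, branch b j ++ [v] <+: t := fun k => by
    obtain ⟨t, ⟨htx, hkt⟩, htb⟩ := ((hb k).sdiff h).nonempty
    exact ⟨t, htx, exists_branch_departure (fun hr => htb ⟨htx, hr⟩) hkt⟩
  choose t htx j hkj v hv hdep using hdeparting
  obtain ⟨⟨u, w⟩, hS⟩ := Set.infinite_univ.exists_infinite_inter_fiber fun k => (b (j k), v k)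
  obtain ⟨φ, -, hφS⟩ := hS.exists_strictMono_sparse fun k => (t k).length
  have hfib : ∀ n, b (j (φ n)) = u ∧ v (φ n) = w := fun n => by simpa using (hφS n).1
  refine ⟨_, Set.range_subset_iff.mpr fun n => htx (φ n), u, w,
    isComb_range_of_departures (j := j ∘ φ) ?_ (fun n => (hfib n).1) (fun n => ?_) fun n => ?_⟩
  · exact fun huw => hv (φ 0) (by rw [(hfib 0).1, (hfib 0).2, huw])
  · exact (hfib n).2 ▸ hdep (φ n)
  · exact (hφS n).2.trans_le (hkj _)

end Tree

/-- Every infinite subset of `m^{<ω}` contains an infinite subset which is a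
`(u,v)`-comb for some pair `(u,v)`. -/
theorem density_of_combs (m : ℕ) (x : Set (List (Fin m))) (hx : x.Infinite) :
    ∃ x' ⊆ x, x'.Infinite ∧ ∃ u v : Fin m, IsComb u v x' := by
  obtain ⟨b, hb⟩ := exists_branch_infinite_cone hx
  obtain ⟨x', hx', u, v, hcomb⟩ := (x ∩ Set.range (branch b)).finite_or_infinite.elim
    (exists_comb_subset_of_finite_inter_range_branch hb)
    exists_comb_subset_of_infinite_inter_range_branch
  exact ⟨x', hx', hcomb.infinite, u, v, hcomb⟩
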